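/- (Lemma 9, generating function.) Suppose in addition 0 < q < 1. For every integer h ≥ 1, every real number x and every real number t, both series below converge absolutely and (1+q) · Σ_{n=0}^{∞} (−1)^n q^{hn} exp([n+x]_q · t) = Σ_{n=0}^{∞} E_{n,q}^{(h,1)}(x) · t^n / n!. -/

import Mathlib

/-!
Expand each `exp ([n + x]_q t)` into its power series in `t`. Since `|[n + x]_q|` is bounded
for `n ≥ 0` and `q ^ (h n)` decays geometrically, the double series converges absolutely and may
be summed over `n` first. By the binomial theorem, `(-1)^n q^(hn) [n + x]_q ^ m` is a combination
of the geometric sequences `(-q^(h+j))^n`, whose sums `1/(1 + q^(h+j))` assemble to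
`E_{m,q}^{(h,1)}(x) / (1 + q)`.
-/

open Finset

/-- The q-number `[x]_q = (1 - q^x)/(1 - q)`, with `q^x = exp (x * log q)` (rpow). -/
noncomputable def qNum (q x : ℝ) : ℝ := (1 - q ^ x) / (1 - q)

/-- `[l]_{-q} = (1 - (-q)^l)/(1 + q)` for a natural number `l`. -/
noncomputable def qNumNeg (q : ℝ) (l : ℕ) : ℝ := (1 - (-q) ^ l) / (1 + q)

/-- The higher-order q-Euler polynomial
`E_{m,q}^{(h,k)}(x) = ((1+q)^k/(1-q)^m) * Σ_{j=0}^m C(m,j) (-1)^j q^{jx} / Π_{i=0}^{k-1} (1 + q^{h+j-i})`. -/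
noncomputable def qE (q : ℝ) (h : ℤ) (k m : ℕ) (x : ℝ) : ℝ :=
  ((1 + q) ^ k / (1 - q) ^ m) *
    ∑ j ∈ Finset.range (m + 1),
      (m.choose j : ℝ) * (-1) ^ j * q ^ ((j : ℝ) * x) /
        ∏ i ∈ Finset.range k, (1 + q ^ ((h : ℝ) + (j : ℝ) - (i : ℝ)))

section ExpExchange

lemma Real.hasSum_pow_div_factorial (x : ℝ) :
    HasSum (fun m : ℕ => x ^ m / m.factorial) (Real.exp x) := by
  rw [Real.exp_eq_exp_ℝ]
  exact NormedSpace.expSeries_div_hasSum_exp x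

lemma hasSum_abs_mul_pow_div_factorial (c a : ℝ) :
    HasSum (fun m : ℕ => |c * a ^ m / m.factorial|) (|c| * Real.exp |a|) := by
  simpa only [abs_div, abs_mul, abs_pow, Nat.abs_cast, mul_div_assoc]
    using (Real.hasSum_pow_div_factorial |a|).mul_left |c|

variable {c a : ℕ → ℝ}

lemma summable_abs_mul_exp (hs : Summable fun n => |c n| * Real.exp |a n|) :
    Summable fun n => |c n * Real.exp (a n)| := by
  refine hs.of_nonneg_of_le (fun _ => abs_nonneg _) fun n => ?_
  rw [abs_mul, Real.abs_exp]
  exact mul_le_mul_of_nonneg_left (Real.exp_le_exp.mpr (le_abs_self _)) (abs_nonneg _)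

lemma summable_abs_mul_pow_div_factorial (hs : Summable fun n => |c n| * Real.exp |a n|) :
    Summable fun p : ℕ × ℕ => |c p.1 * a p.1 ^ p.2 / p.2.factorial| := by
  rw [summable_prod_of_nonneg fun _ => abs_nonneg _]
  exact ⟨fun n => (hasSum_abs_mul_pow_div_factorial (c n) (a n)).summable,
    hs.congr fun n => (hasSum_abs_mul_pow_div_factorial (c n) (a n)).tsum_eq.symm⟩

lemma summable_abs_tsum_mul_pow_div_factorial (hs : Summable fun n => |c n| * Real.exp |a n|) :
    Summable fun m : ℕ => |∑' n, c n * a n ^ m / m.factorial| := by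
  have hcols : Summable fun p : ℕ × ℕ => |c p.2 * a p.2 ^ p.1 / p.1.factorial| :=
    (summable_abs_mul_pow_div_factorial hs).prod_symm
  refine hcols.prod.of_nonneg_of_le (fun _ => abs_nonneg _) fun m => ?_
  simpa only [Real.norm_eq_abs] using norm_tsum_le_tsum_norm
    (f := fun n => c n * a n ^ m / m.factorial)
    (by simpa only [Real.norm_eq_abs] using hcols.prod_factor m)

lemma tsum_mul_exp_eq_tsum_tsum (hs : Summable fun n => |c n| * Real.exp |a n|) :
    ∑' n, c n * Real.exp (a n) = ∑' m : ℕ, ∑' n, c n * a n ^ m / m.factorial := by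
  have hrow (n : ℕ) : c n * Real.exp (a n) = ∑' m : ℕ, c n * a n ^ m / m.factorial := by
    rw [← (Real.hasSum_pow_div_factorial (a n)).tsum_eq, ← tsum_mul_left]
    simp only [mul_div_assoc]
  have hsum : Summable (Function.uncurry fun n m : ℕ => c n * a n ^ m / (m.factorial : ℝ)) :=
    (summable_abs_mul_pow_div_factorial hs).of_abs
  rw [tsum_congr hrow, hsum.tsum_comm]

end ExpExchange

section QEuler

variable {q : ℝ} {h : ℤ}

lemma abs_qNum_le (hq0 : 0 < q) (hq1 : q < 1) {x y : ℝ} (hxy : x ≤ y) :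
    |qNum q y| ≤ max 1 (q ^ x) / (1 - q) := by
  have h1q : 0 < 1 - q := by linarith
  rw [qNum, abs_div, abs_of_pos h1q]
  gcongr
  have hy_le : q ^ y ≤ q ^ x := Real.rpow_le_rpow_of_exponent_ge hq0 hq1.le hxy
  have hy_pos : 0 < q ^ y := Real.rpow_pos_of_pos hq0 y
  rw [abs_le]
  constructor <;> linarith [le_max_left 1 (q ^ x), le_max_right 1 (q ^ x)]

lemma summable_abs_mul_exp_abs_qNum (hq0 : 0 < q) (hq1 : q < 1) (hh : 0 < h) (x t : ℝ) :
    Summable fun n : ℕ =>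
      |(-1 : ℝ) ^ n * q ^ (h * (n : ℤ))| * Real.exp |qNum q ((n : ℝ) + x) * t| := by
  have hgeo : Summable fun n : ℕ => (q ^ h) ^ n * Real.exp (max 1 (q ^ x) / (1 - q) * |t|) :=
    (summable_geometric_of_lt_one (zpow_pos hq0 h).le (zpow_lt_one₀ hq0 hq1 hh)).mul_right _
  refine hgeo.of_nonneg_of_le (fun _ => by positivity) fun n => ?_
  rw [abs_mul, abs_pow, abs_neg, abs_one, one_pow, one_mul, abs_of_pos (zpow_pos hq0 _),
    zpow_mul, zpow_natCast]
  gcongr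
  rw [abs_mul]
  gcongr
  exact abs_qNum_le hq0 hq1 (by simp)

/-- Binomial expansion of `[n + x]_q ^ m`: a combination of geometric sequences in `n`. -/
lemma mul_qNum_pow_eq_sum (hq0 : 0 < q) (x : ℝ) (n m : ℕ) :
    (-1) ^ n * q ^ (h * (n : ℤ)) * qNum q ((n : ℝ) + x) ^ m =
      ∑ j ∈ range (m + 1), (m.choose j * (-1) ^ j * q ^ ((j : ℝ) * x) / (1 - q) ^ m) *
        (-q ^ ((h : ℝ) + j)) ^ n := by
  have hpow (j : ℕ) : (-1) ^ n * q ^ (h * (n : ℤ)) * (q ^ ((n : ℝ) + x)) ^ j =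
      q ^ ((j : ℝ) * x) * (-q ^ ((h : ℝ) + j)) ^ n := by
    have hexps : q ^ ((h * n : ℤ) : ℝ) * q ^ (((n : ℝ) + x) * j) =
        q ^ ((j : ℝ) * x) * q ^ (((h : ℝ) + j) * n) := by
      rw [← Real.rpow_add hq0, ← Real.rpow_add hq0]
      push_cast
      ring_nf
    rw [neg_pow (q ^ ((h : ℝ) + j)), ← Real.rpow_natCast (q ^ ((h : ℝ) + j)) n,
      ← Real.rpow_natCast (q ^ ((n : ℝ) + x)) j, ← Real.rpow_intCast q, ← Real.rpow_mul hq0.le,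
      ← Real.rpow_mul hq0.le]
    linear_combination (-1) ^ n * hexps
  rw [qNum, div_pow, sub_eq_neg_add, add_pow, mul_div_assoc', Finset.mul_sum, Finset.sum_div]
  refine Finset.sum_congr rfl fun j _ => ?_
  rw [neg_pow (q ^ _) j, one_pow, mul_one]
  linear_combination ((-1) ^ j * m.choose j / (1 - q) ^ m) * hpow j

lemma one_add_mul_tsum_mul_qNum_pow (hq0 : 0 < q) (hq1 : q < 1) (hh : 0 < h) (x : ℝ) (m : ℕ) :
    (1 + q) * ∑' n : ℕ, (-1) ^ n * q ^ (h * (n : ℤ)) * qNum q ((n : ℝ) + x) ^ m =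
      qE q h 1 m x := by
  have hratio (j : ℕ) : |-q ^ ((h : ℝ) + j)| < 1 := by
    rw [abs_neg, abs_of_pos (Real.rpow_pos_of_pos hq0 _)]
    exact Real.rpow_lt_one hq0.le hq1 (by positivity)
  simp_rw [mul_qNum_pow_eq_sum hq0]
  rw [Summable.tsum_finsetSum fun j _ => (summable_geometric_of_abs_lt_one (hratio j)).mul_left _]
  simp_rw [tsum_mul_left, tsum_geometric_of_abs_lt_one (hratio _), sub_neg_eq_add]
  rw [qE, Finset.mul_sum, Finset.mul_sum]
  refine Finset.sum_congr rfl fun j _ => ?_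
  simp only [pow_one, Finset.prod_range_one, Nat.cast_zero, sub_zero]
  ring

lemma one_add_mul_tsum_mul_qNum_mul_pow_div_factorial (hq0 : 0 < q) (hq1 : q < 1) (hh : 0 < h)
    (x t : ℝ) (m : ℕ) :
    (1 + q) * ∑' n : ℕ, (-1) ^ n * q ^ (h * (n : ℤ)) * (qNum q ((n : ℝ) + x) * t) ^ m /
        m.factorial = qE q h 1 m x * t ^ m / m.factorial := by
  rw [← one_add_mul_tsum_mul_qNum_pow hq0 hq1 hh x m, mul_assoc, mul_div_assoc,
    ← tsum_mul_right]
  congr 1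
  rw [← tsum_div_const]
  exact tsum_congr fun n => by ring

end QEuler

theorem stmt_18 (q : ℝ) (hq0 : 0 < q) (hq1 : q < 1) (h : ℤ) (hh : 1 ≤ h) (x t : ℝ) :
    Summable (fun n : ℕ =>
        |(-1 : ℝ) ^ n * q ^ (h * (n : ℤ)) * Real.exp (qNum q ((n : ℝ) + x) * t)|) ∧
      Summable (fun n : ℕ => |qE q h 1 n x * t ^ n / (n.factorial : ℝ)|) ∧
      (1 + q) * ∑' n : ℕ, (-1 : ℝ) ^ n * q ^ (h * (n : ℤ)) *
            Real.exp (qNum q ((n : ℝ) + x) * t)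
        = ∑' n : ℕ, qE q h 1 n x * t ^ n / (n.factorial : ℝ) := by
  have hs := summable_abs_mul_exp_abs_qNum hq0 hq1 hh x t
  have hcol := one_add_mul_tsum_mul_qNum_mul_pow_div_factorial hq0 hq1 hh x t
  refine ⟨summable_abs_mul_exp hs, ?_, ?_⟩
  · refine ((summable_abs_tsum_mul_pow_div_factorial hs).mul_left |1 + q|).congr fun m => ?_
    rw [← abs_mul, hcol]
  · rw [tsum_mul_exp_eq_tsum_tsum hs, ← tsum_mul_left]
    exact tsum_congr hcol
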